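/- If a = 1/2, the fixed point set of V_4 on S² is exactly {(b, B(b), 1−b−B(b)) : b ∈ [0,1]}, where B(b) = (3 − 2b − √(4b² − 8b + 5))/2. -/

import Mathlib

/-! For `a = 1/2` the first coordinate of `V4` is the identity, and `V4` maps the plane
`x + y + z = 1` into itself. On the simplex a fixed point is therefore determined by `x` and the
single equation `y = z² + x(1 - x)`, i.e. `z² + z = (1 - x)²`, whose nonnegative root is
`z = (√(4x² - 8x + 5) - 1)/2 = 1 - x - B x`. -/

def V4 (a : ℝ) (p : ℝ × ℝ × ℝ) : ℝ × ℝ × ℝ :=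
  (p.1^2 + 2*a*p.1*(1-p.1), p.2.2^2 + 2*(1-a)*p.1*(1-p.1), p.2.1^2 + 2*p.2.1*p.2.2)

def S2 : Set (ℝ × ℝ × ℝ) :=
  {p | 0 ≤ p.1 ∧ 0 ≤ p.2.1 ∧ 0 ≤ p.2.2 ∧ p.1 + p.2.1 + p.2.2 = 1}

noncomputable def B (b : ℝ) : ℝ := (3 - 2*b - Real.sqrt (4*b^2 - 8*b + 5)) / 2

theorem V4_half_eq_self_iff {x y z : ℝ} (hsum : x + y + z = 1) :
    V4 (1/2) (x, y, z) = (x, y, z) ↔ z^2 + z = (1 - x)^2 := by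
  have hy : y = 1 - x - z := by linarith
  subst hy
  simp only [V4, Prod.mk.injEq]
  constructor
  · rintro ⟨-, hy, -⟩
    linarith
  · intro hz
    exact ⟨by ring, by linarith, by linear_combination -hz⟩

theorem B_nonneg {b : ℝ} (hb : b ≤ 1) : 0 ≤ B b := by
  have : Real.sqrt (4*b^2 - 8*b + 5) ≤ 3 - 2*b :=
    Real.sqrt_le_iff.2 ⟨by linarith, by nlinarith⟩
  rw [B]
  linarith

theorem nonneg_and_sq_add_self_eq_iff (b z : ℝ) :
    (0 ≤ z ∧ z^2 + z = (1 - b)^2) ↔ z = 1 - b - B b := by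
  have hD : 1 ≤ 4*b^2 - 8*b + 5 := by nlinarith [sq_nonneg (b - 1)]
  have hB : 1 - b - B b = (Real.sqrt (4*b^2 - 8*b + 5) - 1) / 2 := by rw [B]; ring
  rw [hB]
  constructor
  · rintro ⟨hz, hquad⟩
    have : Real.sqrt (4*b^2 - 8*b + 5) = 2*z + 1 := by
      rw [show 4*b^2 - 8*b + 5 = (2*z + 1)^2 by linear_combination -4 * hquad]
      exact Real.sqrt_sq (by linarith)
    rw [this]
    ring
  · rintro rfl
    have := Real.one_le_sqrt.2 hD
    have hsq := Real.sq_sqrt (show 0 ≤ 4*b^2 - 8*b + 5 by linarith)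
    exact ⟨by linarith, by linear_combination hsq / 4⟩

theorem V4_fixed_points_half :
    {p ∈ S2 | V4 (1/2) p = p} =
      {p : ℝ × ℝ × ℝ | ∃ b ∈ Set.Icc (0:ℝ) 1, p = (b, B b, 1 - b - B b)} := by
  ext ⟨x, y, z⟩
  simp only [Set.mem_ofPred_eq, S2, Prod.mk.injEq]
  constructor
  · rintro ⟨⟨hx, hy, hz, hsum⟩, hfix⟩
    have hzB := (nonneg_and_sq_add_self_eq_iff x z).1 ⟨hz, (V4_half_eq_self_iff hsum).1 hfix⟩
    exact ⟨x, ⟨hx, by linarith⟩, rfl, by linarith, hzB⟩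
  · rintro ⟨b, ⟨hb0, hb1⟩, hx, rfl, rfl⟩
    subst x
    have hsum : b + B b + (1 - b - B b) = 1 := by ring
    obtain ⟨hz, hquad⟩ := (nonneg_and_sq_add_self_eq_iff b _).2 rfl
    exact ⟨⟨hb0, B_nonneg hb1, hz, hsum⟩, (V4_half_eq_self_iff hsum).2 hquad⟩
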